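/- Consider the system dy/dτ = -(y + (1/√6)(W(z)+N))(1-y²), dz/dτ = √(2/3)g(z)y on [-1,1]×[0,ε], with W, g ∈ C², W(0)=g(0)=0, W'(0)=g'(0)=0, g<0 on (0,ε], and N² < 6. Then the equilibrium p₋ = (-1, 0) is a past attractor in the following sense: there is a neighbourhood U of p₋ in [-1,1]×[0,ε] such that every solution starting in U ∩ ((-1,1)×(0,ε]) converges to p₋ as τ → -∞. -/

import Mathlib

open Real Filter Set Topology

/- Near `p₋` the factor `-(y + (W(z) + N)/√6)` is close to `1 - N/√6 > 0`, so on a small box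
`{y < y*, z < z*}` the `y`-velocity is at least `κ (1 + y)` and, since `g ≤ 0` and `y < 0`, the
`z`-velocity is nonnegative. Hence the box is backward invariant, both coordinates are nonincreasing
backward in time, and because their speeds stay bounded below away from `y = -1` and `z = 0`,
they must converge to `-1` and `0`. -/

theorem monotoneOn_of_hasDerivAt_nonneg {D : Set ℝ} {f f' : ℝ → ℝ} (hD : Convex ℝ D)
    (hf : ∀ t ∈ D, HasDerivAt f (f' t) t) (hf' : ∀ t ∈ interior D, 0 ≤ f' t) :
    MonotoneOn f D :=
  monotoneOn_of_hasDerivWithinAt_nonneg hD (fun t ht => (hf t ht).continuousAt.continuousWithinAt)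
    (fun t ht => (hf t (interior_subset ht)).hasDerivWithinAt) hf'

theorem IsCompact.exists_pos_forall_le_neg {X : Type*} [TopologicalSpace X] {K : Set X}
    {g : X → ℝ} (hK : IsCompact K) (hg : ContinuousOn g K) (hneg : ∀ x ∈ K, g x < 0) :
    ∃ m > 0, ∀ x ∈ K, g x ≤ -m := by
  rcases K.eq_empty_or_nonempty with rfl | hne
  · exact ⟨1, one_pos, by simp⟩
  · obtain ⟨x₀, hx₀, hmax⟩ := hK.exists_isMaxOn hne hg
    exact ⟨-g x₀, neg_pos.2 (hneg x₀ hx₀), fun x hx => by simpa using hmax hx⟩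

theorem forall_le_mem_of_isOpen {X : Type*} [TopologicalSpace X] {f : ℝ → X} {V : Set X}
    {b : ℝ} (hf : ContinuousOn f (Iic b)) (hV : IsOpen V) (hb : f b ∈ V)
    (step : ∀ a < b, (∀ t ∈ Ioc a b, f t ∈ V) → f a ∈ V) : ∀ t ≤ b, f t ∈ V := by
  by_contra! hbad
  set B := Iic b ∩ f ⁻¹' Vᶜ
  have hB : IsClosed B := hf.preimage_isClosed_of_isClosed isClosed_Iic hV.isClosed_compl
  have hBne : B.Nonempty := let ⟨t, ht, hft⟩ := hbad; ⟨t, ht, hft⟩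
  have hBbdd : BddAbove B := ⟨b, fun t ht => ht.1⟩
  obtain ⟨hsb, hfs⟩ := hB.csSup_mem hBne hBbdd
  have hlt : sSup B < b := hsb.lt_of_ne fun h => hfs (h ▸ hb)
  refine hfs (step _ hlt fun t ht => ?_)
  by_contra hft
  exact ht.1.not_ge (le_csSup hBbdd ⟨ht.2, hft⟩)

theorem tendsto_atBot_of_hasDerivAt_of_le {f f' : ℝ → ℝ} {b ℓ : ℝ}
    (hf : ∀ t ≤ b, HasDerivAt f (f' t) t) (hf' : ∀ t ≤ b, 0 ≤ f' t) (hℓ : ∀ t ≤ b, ℓ ≤ f t)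
    (hgap : ∀ a, ℓ < a → ∃ c > 0, ∀ t ≤ b, a ≤ f t → c ≤ f' t) :
    Tendsto f atBot (𝓝 ℓ) := by
  have hmono : MonotoneOn f (Iic b) :=
    monotoneOn_of_hasDerivAt_nonneg (convex_Iic b) hf fun t ht =>
      hf' t (mem_Iic.1 (interior_subset ht))
  rw [tendsto_order]
  refine ⟨fun a ha => eventually_atBot.2 ⟨b, fun t ht => ha.trans_le (hℓ t ht)⟩, fun a ha => ?_⟩
  obtain ⟨T, hTb, hTa⟩ : ∃ T ≤ b, f T < a := by
    by_contra! hge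
    obtain ⟨c, hc, hcf'⟩ := hgap a ha
    have hlin : MonotoneOn (fun t => f t - c * t) (Iic b) :=
      monotoneOn_of_hasDerivAt_nonneg (convex_Iic b)
        (fun t ht => (hf t ht).sub ((hasDerivAt_id t).const_mul c))
        fun t ht => by
          have ht : t ≤ b := mem_Iic.1 (interior_subset ht)
          simpa using hcf' t ht (hge t ht)
    -- a speed `≥ c` drives `f` below `ℓ` within time `(f b - ℓ + 1) / c`
    set T := b - (f b - ℓ + 1) / c
    have hTb : T ≤ b := sub_le_self _ (div_nonneg (by linarith [hℓ b le_rfl]) hc.le)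
    have hfT : f T - c * T ≤ f b - c * b := hlin hTb (mem_Iic.2 le_rfl) hTb
    have hcT : c * (b - T) = f b - ℓ + 1 := by simp only [T]; field_simp; ring
    linarith [hℓ T hTb]
  exact eventually_atBot.2 ⟨T, fun t ht => (hmono (ht.trans hTb) hTb ht).trans_lt hTa⟩

section TrappingBox

variable {F G : ℝ → ℝ → ℝ} {y z : ℝ → ℝ} {eps ystar zstar : ℝ}

theorem forall_le_mem_trapping_box (hy : ∀ τ ≤ (0 : ℝ), HasDerivAt y (F (y τ) (z τ)) τ)
    (hz : ∀ τ ≤ (0 : ℝ), HasDerivAt z (G (y τ) (z τ)) τ)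
    (hbox : ∀ τ ≤ (0 : ℝ), y τ ∈ Icc (-1 : ℝ) 1 ∧ z τ ∈ Icc (0 : ℝ) eps)
    (hF : ∀ Y Z, -1 ≤ Y → Y < ystar → 0 ≤ Z → Z < zstar → 0 ≤ F Y Z)
    (hG : ∀ Y Z, Y < ystar → 0 ≤ Z → Z ≤ eps → 0 ≤ G Y Z)
    (h0 : (y 0, z 0) ∈ Iio ystar ×ˢ Iio zstar) :
    ∀ τ ≤ (0 : ℝ), (y τ, z τ) ∈ Iio ystar ×ˢ Iio zstar := by
  refine forall_le_mem_of_isOpen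
    (fun τ hτ => ((hy τ hτ).continuousAt.prodMk (hz τ hτ).continuousAt).continuousWithinAt)
    (isOpen_Iio.prod isOpen_Iio) h0 fun a ha hlater => ?_
  have hinside : ∀ t ∈ interior (Icc a 0), t ≤ 0 ∧ y t < ystar ∧ z t < zstar := by
    intro t ht
    rw [interior_Icc] at ht
    exact ⟨ht.2.le, hlater t (Ioo_subset_Ioc_self ht)⟩
  have hymono : MonotoneOn y (Icc a 0) :=
    monotoneOn_of_hasDerivAt_nonneg (convex_Icc a 0) (fun t ht => hy t ht.2) fun t ht =>
      let ⟨ht₀, hyt, hzt⟩ := hinside t ht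
      hF _ _ (hbox t ht₀).1.1 hyt (hbox t ht₀).2.1 hzt
  have hzmono : MonotoneOn z (Icc a 0) :=
    monotoneOn_of_hasDerivAt_nonneg (convex_Icc a 0) (fun t ht => hz t ht.2) fun t ht =>
      let ⟨ht₀, hyt, _⟩ := hinside t ht
      hG _ _ hyt (hbox t ht₀).2.1 (hbox t ht₀).2.2
  have haa : a ∈ Icc a 0 := ⟨le_rfl, ha.le⟩
  have h0a : (0 : ℝ) ∈ Icc a 0 := ⟨ha.le, le_rfl⟩
  exact ⟨(hymono haa h0a ha.le).trans_lt h0.1, (hzmono haa h0a ha.le).trans_lt h0.2⟩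

theorem tendsto_atBot_of_trapping_box {κ : ℝ}
    (hy : ∀ τ ≤ (0 : ℝ), HasDerivAt y (F (y τ) (z τ)) τ)
    (hz : ∀ τ ≤ (0 : ℝ), HasDerivAt z (G (y τ) (z τ)) τ)
    (hbox : ∀ τ ≤ (0 : ℝ), y τ ∈ Icc (-1 : ℝ) 1 ∧ z τ ∈ Icc (0 : ℝ) eps) (hκ : 0 < κ)
    (hF : ∀ Y Z, -1 ≤ Y → Y < ystar → 0 ≤ Z → Z < zstar → κ * (1 + Y) ≤ F Y Z)
    (hG : ∀ Y Z, Y < ystar → 0 ≤ Z → Z ≤ eps → 0 ≤ G Y Z)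
    (hGgap : ∀ a > 0, ∃ c > 0, ∀ Y Z, Y < ystar → a ≤ Z → Z ≤ eps → c ≤ G Y Z)
    (h0 : (y 0, z 0) ∈ Iio ystar ×ˢ Iio zstar) :
    Tendsto (fun τ => (y τ, z τ)) atBot (𝓝 (-1, 0)) := by
  have hFnonneg : ∀ Y Z, -1 ≤ Y → Y < ystar → 0 ≤ Z → Z < zstar → 0 ≤ F Y Z :=
    fun Y Z hY₁ hY₂ hZ₀ hZ₁ =>
      (mul_nonneg hκ.le (by linarith)).trans (hF Y Z hY₁ hY₂ hZ₀ hZ₁)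
  have hinv := forall_le_mem_trapping_box hy hz hbox hFnonneg hG h0
  have hFlower : ∀ τ ≤ (0 : ℝ), κ * (1 + y τ) ≤ F (y τ) (z τ) := fun τ hτ =>
    hF _ _ (hbox τ hτ).1.1 (hinv τ hτ).1 (hbox τ hτ).2.1 (hinv τ hτ).2
  have hylim : Tendsto y atBot (𝓝 (-1)) := by
    refine tendsto_atBot_of_hasDerivAt_of_le hy
      (fun τ hτ => (mul_nonneg hκ.le (by linarith [(hbox τ hτ).1.1])).trans (hFlower τ hτ))
      (fun τ hτ => (hbox τ hτ).1.1) fun a ha => ⟨κ * (1 + a), by nlinarith, fun τ hτ haτ => ?_⟩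
    calc κ * (1 + a) ≤ κ * (1 + y τ) := by gcongr
      _ ≤ F (y τ) (z τ) := hFlower τ hτ
  have hzlim : Tendsto z atBot (𝓝 0) := by
    refine tendsto_atBot_of_hasDerivAt_of_le hz
      (fun τ hτ => hG _ _ (hinv τ hτ).1 (hbox τ hτ).2.1 (hbox τ hτ).2.2)
      (fun τ hτ => (hbox τ hτ).2.1) fun a ha => ?_
    obtain ⟨c, hc, hcG⟩ := hGgap a ha
    exact ⟨c, hc, fun τ hτ haτ => hcG _ _ (hinv τ hτ).1 haτ (hbox τ hτ).2.2⟩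
  exact hylim.prodMk_nhds hzlim

end TrappingBox

noncomputable def yField (W : ℝ → ℝ) (N Y Z : ℝ) : ℝ :=
  -(Y + (1 / Real.sqrt 6) * (W Z + N)) * (1 - Y ^ 2)

noncomputable def zField (g : ℝ → ℝ) (Y Z : ℝ) : ℝ :=
  Real.sqrt (2 / 3) * g Z * Y

theorem exists_mul_one_add_le_yField {W : ℝ → ℝ} {N : ℝ} (hW : ContinuousAt W 0) (hW0 : W 0 = 0)
    (hN : N ^ 2 < 6) :
    ∃ ystar zstar κ : ℝ, -1 < ystar ∧ ystar < 0 ∧ 0 < zstar ∧ 0 < κ ∧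
      ∀ Y Z, -1 ≤ Y → Y < ystar → 0 ≤ Z → Z < zstar → κ * (1 + Y) ≤ yField W N Y Z := by
  set b := N / √6
  have hb : |b| < 1 := by
    rw [← sq_lt_one_iff_abs_lt_one, div_pow, sq_sqrt (by norm_num)]
    linarith
  obtain ⟨hb₁, hb₂⟩ := abs_lt.1 hb
  -- at `p₋` the factor `-(y + (W + N)/√6)` is `1 - b`; keep `y` and `W/√6` within a quarter of it
  set κ := (1 - b) / 4 with hκ
  have hWnhds : {Z | W Z / √6 < κ} ∈ 𝓝 (0 : ℝ) :=
    (hW.div_const _).eventually_lt_const (by simp [hW0, hκ]; linarith)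
  obtain ⟨zstar, hzstar, hWsmall⟩ := exists_Ico_subset_of_mem_nhds hWnhds ⟨1, one_pos⟩
  refine ⟨-(1 + b) / 2, zstar, κ, by linarith, by linarith, hzstar, by rw [hκ]; linarith,
    fun Y Z hY₁ hY₂ hZ₀ hZ₁ => ?_⟩
  have hWZ : W Z / √6 < κ := hWsmall ⟨hZ₀, hZ₁⟩
  have hD : κ ≤ -(Y + (1 / √6) * (W Z + N)) := by
    have : (1 / √6) * (W Z + N) = W Z / √6 + b := by ring
    linarith
  have hκ₀ : 0 < κ := by rw [hκ]; linarith
  calc κ * (1 + Y) ≤ -(Y + (1 / √6) * (W Z + N)) * (1 - Y) * (1 + Y) := by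
        gcongr
        · linarith
        · nlinarith [mul_nonneg (hκ₀.le.trans hD) (by linarith : 0 ≤ -Y)]
    _ = yField W N Y Z := by unfold yField; ring

theorem mul_le_zField {g : ℝ → ℝ} {Y Z m k : ℝ} (hm : 0 ≤ m) (hk : 0 ≤ k) (hgZ : g Z ≤ -m)
    (hY : Y ≤ -k) : √(2 / 3) * (m * k) ≤ zField g Y Z := by
  have : m * k ≤ g Z * Y := by nlinarith
  calc √(2 / 3) * (m * k) ≤ √(2 / 3) * (g Z * Y) := by gcongr
    _ = zField g Y Z := by unfold zField; ring

theorem p_minus_past_attractor_general (W g : ℝ → ℝ) (N eps : ℝ)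
    (hW : ContDiff ℝ 2 W) (hg : ContDiff ℝ 2 g)
    (hW0 : W 0 = 0) (hg0 : g 0 = 0)
    (hgneg : ∀ z ∈ Ioc (0 : ℝ) eps, g z < 0)
    (hN : N ^ 2 < 6) :
    ∃ U ∈ nhds ((-1 : ℝ), (0 : ℝ)),
      ∀ y z : ℝ → ℝ,
        (∀ τ ≤ (0 : ℝ), HasDerivAt y
          (-(y τ + (1 / Real.sqrt 6) * (W (z τ) + N)) * (1 - y τ ^ 2)) τ) →
        (∀ τ ≤ (0 : ℝ), HasDerivAt z (Real.sqrt (2 / 3) * g (z τ) * y τ) τ) →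
        (∀ τ ≤ (0 : ℝ), y τ ∈ Icc (-1 : ℝ) 1 ∧ z τ ∈ Icc (0 : ℝ) eps) →
        (y 0, z 0) ∈ U → y 0 ∈ Ioo (-1 : ℝ) 1 → z 0 ∈ Ioc (0 : ℝ) eps →
        Tendsto (fun τ => (y τ, z τ)) atBot (nhds ((-1 : ℝ), (0 : ℝ))) := by
  obtain ⟨ystar, zstar, κ, hystar₁, hystar₀, hzstar, hκ, hF⟩ :=
    exists_mul_one_add_le_yField hW.continuous.continuousAt hW0 hN
  have hG : ∀ Y Z, Y < ystar → 0 ≤ Z → Z ≤ eps → 0 ≤ zField g Y Z := by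
    intro Y Z hY hZ₀ hZ₁
    have hgZ : g Z ≤ 0 := by
      rcases hZ₀.eq_or_lt with rfl | hZ
      · exact hg0.le
      · exact (hgneg Z ⟨hZ, hZ₁⟩).le
    exact mul_nonneg_of_nonpos_of_nonpos
      (mul_nonpos_of_nonneg_of_nonpos (sqrt_nonneg _) hgZ) (by linarith)
  have hGgap : ∀ a > 0, ∃ c > 0, ∀ Y Z, Y < ystar → a ≤ Z → Z ≤ eps → c ≤ zField g Y Z := by
    intro a ha
    obtain ⟨m, hm, hgm⟩ := isCompact_Icc.exists_pos_forall_le_neg hg.continuous.continuousOn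
      fun Z hZ => hgneg Z ⟨ha.trans_le hZ.1, hZ.2⟩
    refine ⟨√(2 / 3) * (m * -ystar), mul_pos (by positivity) (mul_pos hm (by linarith)),
      fun Y Z hY haZ hZ => ?_⟩
    exact mul_le_zField hm.le (by linarith) (hgm Z ⟨haZ, hZ⟩) (by linarith)
  refine ⟨Iio ystar ×ˢ Iio zstar, prod_mem_nhds (Iio_mem_nhds hystar₁) (Iio_mem_nhds hzstar),
    fun y z hy hz hbox h0 _ _ => ?_⟩
  exact tendsto_atBot_of_trapping_box (F := yField W N) (G := zField g) hy hz hbox hκ hF hG hGgap h0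

/-- For the compactified flat FRW system
`dy/dτ = -(y + (1/√6)(W(z)+N))(1-y²)`, `dz/dτ = √(2/3) g(z) y` on
`[-1,1]×[0,ε]` with `W, g` C², `W(0)=g(0)=0`, `W'(0)=g'(0)=0`, `g<0` on
`(0,ε]` and `N² < 6`, the equilibrium `p₋ = (-1,0)` is a past attractor:
there is a neighbourhood `U` of `p₋` such that every solution which stays in
the rectangle and starts in `U` with `y(0) ∈ (-1,1)`, `z(0) ∈ (0,ε]` converges
to `p₋` as `τ → -∞`. -/
theorem p_minus_past_attractor (W g : ℝ → ℝ) (N eps : ℝ) (heps : 0 < eps)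
    (hW : ContDiff ℝ 2 W) (hg : ContDiff ℝ 2 g)
    (hW0 : W 0 = 0) (hg0 : g 0 = 0)
    (hW'0 : deriv W 0 = 0) (hg'0 : deriv g 0 = 0)
    (hgneg : ∀ z ∈ Ioc (0 : ℝ) eps, g z < 0)
    (hN : N ^ 2 < 6) :
    ∃ U ∈ nhds ((-1 : ℝ), (0 : ℝ)),
      ∀ y z : ℝ → ℝ,
        (∀ τ ≤ (0 : ℝ), HasDerivAt y
          (-(y τ + (1 / Real.sqrt 6) * (W (z τ) + N)) * (1 - y τ ^ 2)) τ) →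
        (∀ τ ≤ (0 : ℝ), HasDerivAt z (Real.sqrt (2 / 3) * g (z τ) * y τ) τ) →
        (∀ τ ≤ (0 : ℝ), y τ ∈ Icc (-1 : ℝ) 1 ∧ z τ ∈ Icc (0 : ℝ) eps) →
        (y 0, z 0) ∈ U → y 0 ∈ Ioo (-1 : ℝ) 1 → z 0 ∈ Ioc (0 : ℝ) eps →
        Tendsto (fun τ => (y τ, z τ)) atBot (nhds ((-1 : ℝ), (0 : ℝ))) :=
  p_minus_past_attractor_general W g N eps hW hg hW0 hg0 hgneg hN
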